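/- arXiv:1708.07850 — 7 statements merged into one kernel-verified Lean document; each statement's English description precedes it below -/
import Mathlib

section
/- The matrix factorization regularizer Ω_θ is a convex function on ℝ^{D×N}. -/
open Matrix Filter
open scoped ENNReal BigOperators

/-- The matrix factorization regularizer: infimum over all factorizations `X = U * Vᵀ`
(with a variable number `r` of columns) of the sum of `θ` applied to column pairs. -/
noncomputable def Omega {D N : ℕ} (θ : (Fin D → ℝ) → (Fin N → ℝ) → ℝ≥0∞)
    (X : Matrix (Fin D) (Fin N) ℝ) : ℝ≥0∞ :=
  ⨅ (r : ℕ) (U : Matrix (Fin D) (Fin r) ℝ) (V : Matrix (Fin N) (Fin r) ℝ)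
    (_ : U * Vᵀ = X), ∑ i : Fin r, θ (fun d => U d i) (fun n => V n i)

/-- `θ` is a rank-1 regularizer: positively homogeneous of degree 2, `θ(0,0) = 0`
(nonnegativity is automatic in `ℝ≥0∞`), and `θ(uₙ,vₙ) → ∞` whenever `‖uₙvₙᵀ‖_F → ∞`. -/
def IsRankOneReg {D N : ℕ} (θ : (Fin D → ℝ) → (Fin N → ℝ) → ℝ≥0∞) : Prop :=
  (∀ (α : ℝ), 0 ≤ α → ∀ u v, θ (α • u) (α • v) = ENNReal.ofReal (α ^ 2) * θ u v) ∧
  (θ 0 0 = 0) ∧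
  (∀ (u : ℕ → Fin D → ℝ) (v : ℕ → Fin N → ℝ),
    Tendsto (fun k => Real.sqrt (∑ d, ∑ m, (u k d * v k m) ^ 2)) atTop atTop →
    Tendsto (fun k => θ (u k) (v k)) atTop (nhds ⊤))

/-- The Frobenius (trace) inner product on matrices. -/
noncomputable def frobInner {D N : ℕ} (A B : Matrix (Fin D) (Fin N) ℝ) : ℝ :=
  ∑ d, ∑ n, A d n * B d n

/-- Any factorization gives an upper bound for `Omega`. -/
lemma Omega_le {D N : ℕ} (θ : (Fin D → ℝ) → (Fin N → ℝ) → ℝ≥0∞)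
    {X : Matrix (Fin D) (Fin N) ℝ} {r : ℕ} {U : Matrix (Fin D) (Fin r) ℝ}
    {V : Matrix (Fin N) (Fin r) ℝ} (h : U * Vᵀ = X) :
    Omega θ X ≤ ∑ i : Fin r, θ (fun d => U d i) (fun n => V n i) := by
  refine iInf_le_of_le r (iInf_le_of_le U (iInf_le_of_le V ?_))
  exact iInf_le _ h

/-- Subadditivity of `Omega`, by concatenating factorizations. -/
lemma Omega_add_le {D N : ℕ} (θ : (Fin D → ℝ) → (Fin N → ℝ) → ℝ≥0∞)
    (A B : Matrix (Fin D) (Fin N) ℝ) :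
    Omega θ (A + B) ≤ Omega θ A + Omega θ B := by
  conv_rhs => rw [Omega, Omega]
  simp only [ENNReal.iInf_add, ENNReal.add_iInf]
  refine le_iInf fun r => le_iInf fun U => le_iInf fun V => le_iInf fun hA =>
    le_iInf fun r' => le_iInf fun U' => le_iInf fun V' => le_iInf fun hB => ?_
  have h : (Matrix.of fun d => Fin.append (U d) (U' d) : Matrix (Fin D) (Fin (r + r')) ℝ) *
      (Matrix.of fun n => Fin.append (V n) (V' n) : Matrix (Fin N) (Fin (r + r')) ℝ)ᵀ = A + B := by
    ext d n
    simp only [Matrix.mul_apply, Matrix.transpose_apply, Fin.sum_univ_add,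
      Fin.append_left, Fin.append_right, Matrix.add_apply]
    rw [← hA, ← hB]
    simp [Matrix.mul_apply]
    ring
  refine (Omega_le θ h).trans (le_of_eq ?_)
  rw [Fin.sum_univ_add, add_comm]
  congr 1 <;> exact Finset.sum_congr rfl fun i _ => by
    simp only [Matrix.of_apply, Fin.append_left, Fin.append_right]

/-- Positive homogeneity (as an inequality) of `Omega`, by scaling factors by `√c`. -/
lemma Omega_smul_le {D N : ℕ} (θ : (Fin D → ℝ) → (Fin N → ℝ) → ℝ≥0∞)
    (hθ : IsRankOneReg θ) (c : ℝ) (hc : 0 ≤ c) (X : Matrix (Fin D) (Fin N) ℝ) :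
    Omega θ (c • X) ≤ ENNReal.ofReal c * Omega θ X := by
  rcases eq_or_lt_of_le hc with rfl | hc'
  · have h0 : (0 : Matrix (Fin D) (Fin 0) ℝ) * (0 : Matrix (Fin N) (Fin 0) ℝ)ᵀ
        = (0 : ℝ) • X := by
      ext d n; simp [Matrix.mul_apply]
    simpa using Omega_le θ h0
  · have hne : ENNReal.ofReal c ≠ 0 := by simp [ENNReal.ofReal_eq_zero, not_le, hc']
    conv_rhs => rw [Omega]
    simp only [ENNReal.mul_iInf_of_ne hne ENNReal.ofReal_ne_top]
    refine le_iInf fun r => le_iInf fun U => le_iInf fun V => le_iInf fun hX => ?_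
    set s := Real.sqrt c with hs
    have hsnn : 0 ≤ s := Real.sqrt_nonneg c
    have hss : s * s = c := Real.mul_self_sqrt hc
    have h : (s • U) * (s • V)ᵀ = c • X := by
      rw [Matrix.transpose_smul, Matrix.smul_mul, Matrix.mul_smul, smul_smul, hss, hX]
    refine (Omega_le θ h).trans ?_
    rw [Finset.mul_sum]
    refine le_of_eq (Finset.sum_congr rfl fun i _ => ?_)
    have e1 : (fun d => (s • U) d i) = s • (fun d => U d i) := by
      funext d; simp [Matrix.smul_apply]
    have e2 : (fun n => (s • V) n i) = s • (fun n => V n i) := by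
      funext n; simp [Matrix.smul_apply]
    rw [e1, e2, hθ.1 s hsnn, sq, hss]

/-- The matrix factorization regularizer `Ω_θ` is a convex function on `ℝ^{D×N}`. -/
theorem omega_convex {D N : ℕ} (θ : (Fin D → ℝ) → (Fin N → ℝ) → ℝ≥0∞)
    (hθ : IsRankOneReg θ) :
    ∀ (X Z : Matrix (Fin D) (Fin N) ℝ) (a b : ℝ), 0 ≤ a → 0 ≤ b → a + b = 1 →
      Omega θ (a • X + b • Z) ≤
        ENNReal.ofReal a * Omega θ X + ENNReal.ofReal b * Omega θ Z := by
  intro X Z a b ha hb _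
  exact (Omega_add_le θ _ _).trans
    (add_le_add (Omega_smul_le θ hθ a ha X) (Omega_smul_le θ hθ b hb Z))
end

section
/- The Fenchel conjugate of Ω_θ is the indicator function of the set {W : uᵀWv ≤ θ(u,v) for all (u,v)}. That is, Ω_θ*(W) = 0 if uᵀWv ≤ θ(u,v) for all u ∈ ℝ^D, v ∈ ℝ^N, and Ω_θ*(W) = +∞ otherwise. -/
open Matrix Filter
open scoped ENNReal BigOperators

/-!
A factorization `X = U Vᵀ` splits `⟨W, X⟩` into the sum of `uᵢᵀ W vᵢ` over its column pairs, so if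
`uᵀ W v ≤ θ(u, v)` for all pairs then `⟨W, X⟩ ≤ Ω_θ(X)`, with equality at `X = 0`. Conversely, a
violating pair scaled by `α ≥ 0` gives the rank-one `X = α² u vᵀ` with
`⟨W, X⟩ - Ω_θ(X) ≥ α² (uᵀ W v - θ(u, v)) → ∞`, by the degree-2 homogeneity of `θ`.
-/

lemma EReal.coe_le_coe_ennreal_iff_ofReal_le {x : ℝ} {y : ℝ≥0∞} :
    (x : EReal) ≤ y ↔ ENNReal.ofReal x ≤ y := by
  rcases le_or_gt 0 x with hx | hx
  · rw [← EReal.coe_ennreal_le_coe_ennreal_iff, EReal.coe_ennreal_ofReal, max_eq_left hx]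
  · rw [ENNReal.ofReal_of_nonpos hx.le]
    exact iff_of_true ((EReal.coe_lt_coe_iff.2 hx).le.trans (EReal.coe_ennreal_nonneg y)) zero_le

section Factorization

variable {D N : ℕ} (θ : (Fin D → ℝ) → (Fin N → ℝ) → ℝ≥0∞)

lemma frobInner_mul_transpose {r : ℕ} (W : Matrix (Fin D) (Fin N) ℝ)
    (U : Matrix (Fin D) (Fin r) ℝ) (V : Matrix (Fin N) (Fin r) ℝ) :
    frobInner W (U * Vᵀ) = ∑ i, (fun d => U d i) ⬝ᵥ W *ᵥ (fun n => V n i) := by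
  simp only [frobInner, mul_apply, transpose_apply, dotProduct, mulVec, Finset.mul_sum]
  conv_rhs => rw [Finset.sum_comm]
  refine Finset.sum_congr rfl fun d _ => ?_
  conv_rhs => rw [Finset.sum_comm]
  exact Finset.sum_congr rfl fun _ _ => Finset.sum_congr rfl fun _ _ => by ring

lemma Omega_mul_transpose_le {r : ℕ} (U : Matrix (Fin D) (Fin r) ℝ)
    (V : Matrix (Fin N) (Fin r) ℝ) :
    Omega θ (U * Vᵀ) ≤ ∑ i, θ (fun d => U d i) (fun n => V n i) :=
  (iInf_le _ r).trans <| (iInf_le _ U).trans <| (iInf_le _ V).trans (iInf_le _ rfl)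

lemma Omega_zero : Omega θ (0 : Matrix (Fin D) (Fin N) ℝ) = 0 :=
  le_antisymm (by simpa using Omega_mul_transpose_le θ (0 : Matrix (Fin D) (Fin 0) ℝ) 0) zero_le

lemma Omega_rankOne_le (u : Fin D → ℝ) (v : Fin N → ℝ) :
    Omega θ (replicateCol (Fin 1) u * (replicateCol (Fin 1) v)ᵀ) ≤ θ u v := by
  simpa using Omega_mul_transpose_le θ (replicateCol (Fin 1) u) (replicateCol (Fin 1) v)

lemma frobInner_rankOne (W : Matrix (Fin D) (Fin N) ℝ) (u : Fin D → ℝ) (v : Fin N → ℝ) :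
    frobInner W (replicateCol (Fin 1) u * (replicateCol (Fin 1) v)ᵀ) = u ⬝ᵥ W *ᵥ v := by
  simpa using frobInner_mul_transpose W (replicateCol (Fin 1) u) (replicateCol (Fin 1) v)

lemma frobInner_le_Omega (W : Matrix (Fin D) (Fin N) ℝ)
    (hW : ∀ u v, ((u ⬝ᵥ W *ᵥ v : ℝ) : EReal) ≤ θ u v) (X : Matrix (Fin D) (Fin N) ℝ) :
    ((frobInner W X : ℝ) : EReal) ≤ Omega θ X := by
  rw [EReal.coe_le_coe_ennreal_iff_ofReal_le]
  simp only [Omega, le_iInf_iff]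
  rintro r U V rfl
  rw [frobInner_mul_transpose]
  calc ENNReal.ofReal (∑ i, (fun d => U d i) ⬝ᵥ W *ᵥ (fun n => V n i))
      ≤ ∑ i, ENNReal.ofReal ((fun d => U d i) ⬝ᵥ W *ᵥ (fun n => V n i)) :=
        Finset.le_sum_of_subadditive _ ENNReal.ofReal_zero.le (fun _ _ => ENNReal.ofReal_add_le) _ _
    _ ≤ ∑ i, θ (fun d => U d i) (fun n => V n i) :=
        Finset.sum_le_sum fun _ _ => EReal.coe_le_coe_ennreal_iff_ofReal_le.1 (hW _ _)

lemma sub_le_frobInner_sub_Omega_rankOne (W : Matrix (Fin D) (Fin N) ℝ) (u : Fin D → ℝ)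
    (v : Fin N → ℝ) :
    ((u ⬝ᵥ W *ᵥ v : ℝ) : EReal) - θ u v ≤
      ((frobInner W (replicateCol (Fin 1) u * (replicateCol (Fin 1) v)ᵀ) : ℝ) : EReal) -
        Omega θ (replicateCol (Fin 1) u * (replicateCol (Fin 1) v)ᵀ) := by
  rw [frobInner_rankOne]
  exact EReal.sub_le_sub le_rfl (EReal.coe_ennreal_le_coe_ennreal_iff.2 (Omega_rankOne_le θ u v))

lemma iSup_frobInner_sub_Omega_eq_top
    (hhom : ∀ α : ℝ, 0 ≤ α → ∀ u v, θ (α • u) (α • v) = ENNReal.ofReal (α ^ 2) * θ u v)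
    (W : Matrix (Fin D) (Fin N) ℝ) {u : Fin D → ℝ} {v : Fin N → ℝ}
    (huv : (θ u v : EReal) < ((u ⬝ᵥ W *ᵥ v : ℝ) : EReal)) :
    ⨆ X, ((frobInner W X : ℝ) : EReal) - Omega θ X = ⊤ := by
  set c := u ⬝ᵥ W *ᵥ v
  have hfin : θ u v ≠ ⊤ := fun h => by simp [h] at huv
  set t := (θ u v).toReal
  have hθt : (θ u v : EReal) = t := (EReal.coe_ennreal_toReal hfin).symm
  have htc : 0 < c - t := sub_pos.2 (by exact_mod_cast hθt ▸ huv)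
  have hscaled (α : ℝ) (hα : 0 ≤ α) :
      (((α • u) ⬝ᵥ W *ᵥ (α • v) : ℝ) : EReal) - θ (α • u) (α • v) =
        ((α ^ 2 * (c - t) : ℝ) : EReal) := by
    rw [hhom α hα, EReal.coe_ennreal_mul, EReal.coe_ennreal_ofReal, max_eq_left (by positivity),
      hθt, smul_dotProduct, mulVec_smul, dotProduct_smul, smul_eq_mul, smul_eq_mul]
    norm_cast
    ring
  rw [EReal.eq_top_iff_forall_lt]
  intro M
  set α := Real.sqrt ((|M| + 1) / (c - t))
  have hα : α ^ 2 * (c - t) = |M| + 1 := by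
    rw [Real.sq_sqrt (div_nonneg (by positivity) htc.le), div_mul_cancel₀ _ htc.ne']
  refine lt_of_lt_of_le ?_
    (le_iSup_of_le _ (sub_le_frobInner_sub_Omega_rankOne θ W (α • u) (α • v)))
  rw [hscaled α (Real.sqrt_nonneg _), hα, EReal.coe_lt_coe_iff]
  linarith [le_abs_self M]

end Factorization

/-- The Fenchel conjugate of `Ω_θ` is the indicator function of
`{W : uᵀWv ≤ θ(u,v) ∀(u,v)}`. -/
theorem omega_fenchel_conjugate {D N : ℕ} (θ : (Fin D → ℝ) → (Fin N → ℝ) → ℝ≥0∞)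
    (hθ : IsRankOneReg θ) (W : Matrix (Fin D) (Fin N) ℝ) :
    ((∀ (u : Fin D → ℝ) (v : Fin N → ℝ), ((u ⬝ᵥ W *ᵥ v : ℝ) : EReal) ≤ (θ u v : EReal)) →
      (⨆ X : Matrix (Fin D) (Fin N) ℝ,
        ((frobInner W X : ℝ) : EReal) - ((Omega θ X : ℝ≥0∞) : EReal)) = 0) ∧
    ((¬ ∀ (u : Fin D → ℝ) (v : Fin N → ℝ), ((u ⬝ᵥ W *ᵥ v : ℝ) : EReal) ≤ (θ u v : EReal)) →
      (⨆ X : Matrix (Fin D) (Fin N) ℝ,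
        ((frobInner W X : ℝ) : EReal) - ((Omega θ X : ℝ≥0∞) : EReal)) = ⊤) := by
  refine ⟨fun hW => le_antisymm ?_ ?_, fun hW => ?_⟩
  · exact iSup_le fun X => EReal.sub_nonpos.2 (frobInner_le_Omega θ W hW X)
  · refine le_trans ?_ (le_iSup _ 0)
    simp [frobInner, Omega_zero]
  · push Not at hW
    obtain ⟨u, v, huv⟩ := hW
    exact iSup_frobInner_sub_Omega_eq_top θ hθ.1 W huv
end

section
/- Given a factorization X = UVᵀ with r columns, if there exists a matrix W such that ∑_{i=1}^r U_iᵀ W V_i = ∑_{i=1}^r θ(U_i, V_i) and uᵀWv ≤ θ(u,v) for all (u,v), then the factorization UVᵀ achieves the infimum defining Ω_θ(X) (i.e., ∑_i θ(U_i,V_i) = Ω_θ(X)) and W ∈ ∂Ω_θ(X). -/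
open Matrix Filter
open scoped ENNReal BigOperators

lemma ereal_coe_ennreal_sum {α : Type*} (s : Finset α) (f : α → ℝ≥0∞) :
    ((∑ i ∈ s, f i : ℝ≥0∞) : EReal) = ∑ i ∈ s, ((f i : EReal)) :=
  map_sum (⟨⟨(↑), EReal.coe_ennreal_zero⟩, EReal.coe_ennreal_add⟩ : ℝ≥0∞ →+ EReal) f s

lemma ereal_coe_real_sum {α : Type*} (s : Finset α) (f : α → ℝ) :
    ((∑ i ∈ s, f i : ℝ) : EReal) = ∑ i ∈ s, ((f i : EReal)) :=
  map_sum (⟨⟨(↑), EReal.coe_zero⟩, EReal.coe_add⟩ : ℝ →+ EReal) f s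

lemma frob_factor {D N r : ℕ} (W : Matrix (Fin D) (Fin N) ℝ)
    (U : Matrix (Fin D) (Fin r) ℝ) (V : Matrix (Fin N) (Fin r) ℝ) :
    frobInner W (U * Vᵀ) = ∑ i : Fin r, (fun d => U d i) ⬝ᵥ W *ᵥ (fun n => V n i) := by
  simp only [frobInner, Matrix.mul_apply, transpose_apply, dotProduct, mulVec, Finset.mul_sum]
  rw [Finset.sum_congr rfl fun d _ => Finset.sum_comm, Finset.sum_comm]
  exact Finset.sum_congr rfl fun i _ => Finset.sum_congr rfl fun d _ =>
    Finset.sum_congr rfl fun n _ => by ring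

lemma frob_lb {D N : ℕ} (θ : (Fin D → ℝ) → (Fin N → ℝ) → ℝ≥0∞)
    (W : Matrix (Fin D) (Fin N) ℝ)
    (hle : ∀ (u : Fin D → ℝ) (v : Fin N → ℝ), ((u ⬝ᵥ W *ᵥ v : ℝ) : EReal) ≤ (θ u v : EReal))
    (Z : Matrix (Fin D) (Fin N) ℝ) :
    ((frobInner W Z : ℝ) : EReal) ≤ ((Omega θ Z : ℝ≥0∞) : EReal) := by
  have key : ∀ (r' : ℕ) (U' : Matrix (Fin D) (Fin r') ℝ) (V' : Matrix (Fin N) (Fin r') ℝ),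
      U' * V'ᵀ = Z →
      ((frobInner W Z : ℝ) : EReal)
        ≤ ((∑ i : Fin r', θ (fun d => U' d i) (fun n => V' n i) : ℝ≥0∞) : EReal) := by
    intro r' U' V' h
    rw [← h, frob_factor, ereal_coe_real_sum, ereal_coe_ennreal_sum]
    exact Finset.sum_le_sum fun i _ => hle _ _
  have h2 : ENNReal.ofReal (frobInner W Z) ≤ Omega θ Z := by
    rw [Omega]
    refine le_iInf fun r' => le_iInf fun U' => le_iInf fun V' => le_iInf fun h => ?_
    rw [← EReal.coe_ennreal_le_coe_ennreal_iff, EReal.coe_ennreal_ofReal]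
    exact max_le (key r' U' V' h) (EReal.coe_ennreal_nonneg _)
  calc ((frobInner W Z : ℝ) : EReal) ≤ max (frobInner W Z : EReal) 0 := le_max_left _ _
    _ = (ENNReal.ofReal (frobInner W Z) : EReal) := (EReal.coe_ennreal_ofReal).symm
    _ ≤ ((Omega θ Z : ℝ≥0∞) : EReal) := EReal.coe_ennreal_le_coe_ennreal_iff.mpr h2

/-- If for a factorization `X = UVᵀ` there is a `W` with `∑ᵢ Uᵢᵀ W Vᵢ = ∑ᵢ θ(Uᵢ,Vᵢ)` and
`uᵀWv ≤ θ(u,v)` for all `(u,v)`, then the factorization achieves the infimum defining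
`Ω_θ(X)` and `W ∈ ∂Ω_θ(X)`. -/
theorem optimal_factorization {D N : ℕ} (θ : (Fin D → ℝ) → (Fin N → ℝ) → ℝ≥0∞)
    (hθ : IsRankOneReg θ) (r : ℕ)
    (U : Matrix (Fin D) (Fin r) ℝ) (V : Matrix (Fin N) (Fin r) ℝ)
    (X W : Matrix (Fin D) (Fin N) ℝ) (hX : U * Vᵀ = X)
    (heq : ((∑ i : Fin r, (fun d => U d i) ⬝ᵥ W *ᵥ (fun n => V n i) : ℝ) : EReal)
      = ((∑ i : Fin r, θ (fun d => U d i) (fun n => V n i) : ℝ≥0∞) : EReal))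
    (hle : ∀ (u : Fin D → ℝ) (v : Fin N → ℝ), ((u ⬝ᵥ W *ᵥ v : ℝ) : EReal) ≤ (θ u v : EReal)) :
    (∑ i : Fin r, θ (fun d => U d i) (fun n => V n i) = Omega θ X) ∧
    (∀ Z : Matrix (Fin D) (Fin N) ℝ,
      ((Omega θ X : ℝ≥0∞) : EReal) + ((frobInner W (Z - X) : ℝ) : EReal)
        ≤ ((Omega θ Z : ℝ≥0∞) : EReal)) := by
  set S : ℝ≥0∞ := ∑ i : Fin r, θ (fun d => U d i) (fun n => V n i) with hS
  have h1 : Omega θ X ≤ S := by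
    rw [Omega]
    exact iInf_le_of_le r (iInf_le_of_le U (iInf_le_of_le V (iInf_le_of_le hX le_rfl)))
  have h2 : (S : EReal) = ((frobInner W X : ℝ) : EReal) := by
    rw [← heq, ← hX, frob_factor]
  have h3 : (S : EReal) ≤ ((Omega θ X : ℝ≥0∞) : EReal) := h2 ▸ frob_lb θ W hle X
  have heqS : S = Omega θ X :=
    le_antisymm (EReal.coe_ennreal_le_coe_ennreal_iff.mp h3) h1
  refine ⟨heqS, fun Z => ?_⟩
  have hΩ : ((Omega θ X : ℝ≥0∞) : EReal) = ((frobInner W X : ℝ) : EReal) := by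
    rw [← heqS]; exact h2
  have hadd : frobInner W X + frobInner W (Z - X) = frobInner W Z := by
    simp only [frobInner, ← Finset.sum_add_distrib, Matrix.sub_apply]
    exact Finset.sum_congr rfl fun d _ => Finset.sum_congr rfl fun n _ => by ring
  rw [hΩ, ← EReal.coe_add, hadd]
  exact frob_lb θ W hle Z
end

section
/- If (Û, V̂) satisfies ∑_i θ(Û_i, V̂_i) = Ω_θ(Û V̂ᵀ) and X̂ = Û V̂ᵀ is a global minimizer of the convex problem min_X ℓ(Y,X) + λΩ_θ(X), then (Û, V̂) is a global minimizer of the factorized problem min over all r, U ∈ ℝ^{D×r}, V ∈ ℝ^{N×r} of ℓ(Y,UVᵀ) + λ∑_{i=1}^r θ(U_i,V_i). -/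
open Matrix Filter
open scoped ENNReal BigOperators

/-- If `(Û,V̂)` is an optimal factorization of `X̂ = ÛV̂ᵀ` and `X̂` globally minimizes the
convex problem, then `(Û,V̂)` globally minimizes the factorized problem (over all sizes `r`). -/
theorem global_min_transfer {D N : ℕ} (θ : (Fin D → ℝ) → (Fin N → ℝ) → ℝ≥0∞)
    (hθ : IsRankOneReg θ) (ℓ : Matrix (Fin D) (Fin N) ℝ → ℝ)
    (hconv : ConvexOn ℝ Set.univ ℓ) (lam : ℝ) (hlam : 0 < lam)
    (rh : ℕ) (Uh : Matrix (Fin D) (Fin rh) ℝ) (Vh : Matrix (Fin N) (Fin rh) ℝ)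
    (hfac : ∑ i : Fin rh, θ (fun d => Uh d i) (fun n => Vh n i) = Omega θ (Uh * Vhᵀ))
    (hglob : ∀ X : Matrix (Fin D) (Fin N) ℝ,
      ((ℓ (Uh * Vhᵀ) : ℝ) : EReal) + ((ENNReal.ofReal lam * Omega θ (Uh * Vhᵀ) : ℝ≥0∞) : EReal)
        ≤ ((ℓ X : ℝ) : EReal) + ((ENNReal.ofReal lam * Omega θ X : ℝ≥0∞) : EReal)) :
    ∀ (r : ℕ) (U : Matrix (Fin D) (Fin r) ℝ) (V : Matrix (Fin N) (Fin r) ℝ),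
      ((ℓ (Uh * Vhᵀ) : ℝ) : EReal) +
        ((ENNReal.ofReal lam * ∑ i : Fin rh, θ (fun d => Uh d i) (fun n => Vh n i) : ℝ≥0∞) : EReal)
      ≤ ((ℓ (U * Vᵀ) : ℝ) : EReal) +
        ((ENNReal.ofReal lam * ∑ i : Fin r, θ (fun d => U d i) (fun n => V n i) : ℝ≥0∞) : EReal) := by
  intro r U V
  have hΩ : Omega θ (U * Vᵀ) ≤ ∑ i : Fin r, θ (fun d => U d i) (fun n => V n i) := by
    refine iInf_le_of_le r (iInf_le_of_le U (iInf_le_of_le V (iInf_le_of_le rfl le_rfl)))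
  calc ((ℓ (Uh * Vhᵀ) : ℝ) : EReal) +
        ((ENNReal.ofReal lam * ∑ i : Fin rh, θ (fun d => Uh d i) (fun n => Vh n i) : ℝ≥0∞) : EReal)
      = ((ℓ (Uh * Vhᵀ) : ℝ) : EReal) +
        ((ENNReal.ofReal lam * Omega θ (Uh * Vhᵀ) : ℝ≥0∞) : EReal) := by rw [hfac]
    _ ≤ ((ℓ (U * Vᵀ) : ℝ) : EReal) +
        ((ENNReal.ofReal lam * Omega θ (U * Vᵀ) : ℝ≥0∞) : EReal) := hglob _
    _ ≤ _ := by
        gcongr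
        exact EReal.coe_ennreal_le_coe_ennreal_iff.mpr (mul_le_mul_right hΩ _)
end

section
/- Sufficient global optimality conditions: under the assumptions of the previous setup, a point (Ũ,Ṽ,Q̃) is a global minimum of f(U,V,Q) = ℓ(Y,UVᵀ,Q) + λ∑_{i=1}^r θ(U_i,V_i) if (1) 0 ∈ ∂_Q ℓ(Y,ŨṼᵀ,Q̃), (2) Ũ_iᵀ(−(1/λ)∇_X ℓ(Y,ŨṼᵀ,Q̃))Ṽ_i = θ(Ũ_i,Ṽ_i) for all i ∈ [r], and (3) uᵀ(−(1/λ)∇_X ℓ(Y,ŨṼᵀ,Q̃))v ≤ θ(u,v) for all (u,v). -/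
open Matrix Filter
open scoped ENNReal BigOperators

/-!
Write `G = ∇ₓℓ(ŨṼᵀ, Q̃)` and `W = -(1/λ) G`. Joint convexity together with the optimality of `Q̃`
makes `(G, 0)` a subgradient of `ℓ` at `(ŨṼᵀ, Q̃)`, so
`ℓ(UVᵀ, Q) ≥ ℓ(ŨṼᵀ, Q̃) + λ W(ŨṼᵀ) - λ W(UVᵀ)`. Splitting `UVᵀ = ∑ᵢ UᵢVᵢᵀ` into rank-one
pieces, the polar inequality (3) gives `W(UVᵀ) ≤ ∑ᵢ θ(Uᵢ, Vᵢ)`, while the alignment condition (2)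
gives `W(ŨṼᵀ) = ∑ᵢ θ(Ũᵢ, Ṽᵢ)`; adding up yields the claim.
-/

open Set

theorem IsLocalMinOn.nonneg_of_hasDerivWithinAt_Icc {g : ℝ → ℝ} {g' a b : ℝ} (hab : a < b)
    (hmin : IsLocalMinOn g (Icc a b) a) (hg : HasDerivWithinAt g g' (Icc a b) a) : 0 ≤ g' := by
  have hcone : b - a ∈ posTangentConeAt (Icc a b) a :=
    sub_mem_posTangentConeAt_of_segment_subset (segment_eq_Icc hab.le).subset
  have h := hmin.hasFDerivWithinAt_nonneg hg.hasFDerivWithinAt hcone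
  rw [ContinuousLinearMap.toSpanSingleton_apply, smul_eq_mul] at h
  exact nonneg_of_mul_nonneg_right h (sub_pos.mpr hab)

section FirstOrder

variable {E F : Type*} [NormedAddCommGroup E] [NormedSpace ℝ E] [AddCommGroup F] [Module ℝ F]
  {ℓ : E → F → ℝ} {x₀ x : E} {q₀ q : F}

/-- Convexity along the segment to `(x, q)` controls `ℓ (x₀ + t d) (q₀ + t (q - q₀))`; averaging
that point with `(x₀ - t d, q₀)` lands on `(x₀, q₀ + (t / 2) (q - q₀))`, where `q₀` is optimal. -/
theorem ConvexOn.le_sub_smul_add_mul_of_isMinOn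
    (hconv : ConvexOn ℝ univ (fun p : E × F => ℓ p.1 p.2)) (hmin : ∀ q', ℓ x₀ q₀ ≤ ℓ x₀ q')
    {t : ℝ} (ht : t ∈ Icc (0 : ℝ) 1) :
    ℓ x₀ q₀ ≤ ℓ (x₀ - t • (x - x₀)) q₀ + t * (ℓ x q - ℓ x₀ q₀) := by
  obtain ⟨ht0, ht1⟩ := ht
  have hmove : ℓ (x₀ + t • (x - x₀)) (q₀ + t • (q - q₀)) ≤ (1 - t) * ℓ x₀ q₀ + t * ℓ x q := by
    have h := hconv.2 (mem_univ (x₀, q₀)) (mem_univ (x, q)) (sub_nonneg.mpr ht1) ht0 (by ring)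
    have hpt : (1 - t) • (x₀, q₀) + t • (x, q) = (x₀ + t • (x - x₀), q₀ + t • (q - q₀)) := by
      ext <;> simp <;> module
    simpa only [hpt, smul_eq_mul] using h
  have hmid : ℓ x₀ (q₀ + (t / 2) • (q - q₀)) ≤
      (1 / 2) * ℓ (x₀ + t • (x - x₀)) (q₀ + t • (q - q₀)) + (1 / 2) * ℓ (x₀ - t • (x - x₀)) q₀ := by
    have h := hconv.2 (mem_univ (x₀ + t • (x - x₀), q₀ + t • (q - q₀)))
      (mem_univ (x₀ - t • (x - x₀), q₀)) (by norm_num : (0 : ℝ) ≤ 1 / 2)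
      (by norm_num : (0 : ℝ) ≤ 1 / 2) (by norm_num)
    have hpt : (1 / 2 : ℝ) • (x₀ + t • (x - x₀), q₀ + t • (q - q₀)) +
        (1 / 2 : ℝ) • (x₀ - t • (x - x₀), q₀) = (x₀, q₀ + (t / 2) • (q - q₀)) := by
      ext <;> simp <;> module
    simpa only [hpt, smul_eq_mul] using h
  linarith [hmin (q₀ + (t / 2) • (q - q₀))]

theorem ConvexOn.add_fderiv_sub_le_of_isMinOn
    (hconv : ConvexOn ℝ univ (fun p : E × F => ℓ p.1 p.2)) {G : E →L[ℝ] ℝ}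
    (hG : HasFDerivAt (fun y => ℓ y q₀) G x₀) (hmin : ∀ q', ℓ x₀ q₀ ≤ ℓ x₀ q') (x : E) (q : F) :
    ℓ x₀ q₀ + G (x - x₀) ≤ ℓ x q := by
  set c := ℓ x q - ℓ x₀ q₀
  have hline : HasDerivAt (fun t : ℝ => x₀ - t • (x - x₀)) (-(x - x₀)) 0 := by
    simpa using ((hasDerivAt_id (0 : ℝ)).smul_const (x - x₀)).const_sub x₀
  have hderiv : HasDerivAt (fun t : ℝ => ℓ (x₀ - t • (x - x₀)) q₀ + t * c)
      (-G (x - x₀) + c) 0 := by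
    have hcomp := hG.comp_hasDerivAt_of_eq (0 : ℝ) hline (by simp)
    have h := hcomp.fun_add ((hasDerivAt_id (0 : ℝ)).mul_const c)
    simp only [Function.comp_def, id, map_neg, one_mul] at h
    exact h
  have hmin' : IsMinOn (fun t : ℝ => ℓ (x₀ - t • (x - x₀)) q₀ + t * c) (Icc 0 1) 0 :=
    fun t ht => by simpa using hconv.le_sub_smul_add_mul_of_isMinOn (q := q) hmin ht
  have hslope := hmin'.localize.nonneg_of_hasDerivWithinAt_Icc one_pos hderiv.hasDerivWithinAt
  linarith

end FirstOrder

theorem Matrix.mul_transpose_eq_sum_vecMulVec {m n k α : Type*} [Fintype k]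
    [NonUnitalNonAssocSemiring α] (U : Matrix m k α) (V : Matrix n k α) :
    U * Vᵀ = ∑ i, vecMulVec (fun a => U a i) (fun b => V b i) := by
  ext a b
  simp [Matrix.mul_apply, vecMulVec_apply, Matrix.sum_apply]

theorem EReal.coe_finset_sum {ι : Type*} (s : Finset ι) (f : ι → ℝ) :
    ((∑ i ∈ s, f i : ℝ) : EReal) = ∑ i ∈ s, (f i : EReal) :=
  map_sum (⟨⟨(↑), EReal.coe_zero⟩, EReal.coe_add⟩ : ℝ →+ EReal) f s

theorem EReal.coe_ennreal_finset_sum {ι : Type*} (s : Finset ι) (f : ι → ℝ≥0∞) :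
    ((∑ i ∈ s, f i : ℝ≥0∞) : EReal) = ∑ i ∈ s, (f i : EReal) :=
  map_sum (⟨⟨(↑), EReal.coe_ennreal_zero⟩, EReal.coe_ennreal_add⟩ : ℝ≥0∞ →+ EReal) f s

theorem EReal.coe_ennreal_ofReal_mul {c : ℝ} (hc : 0 ≤ c) (b : ℝ≥0∞) :
    ((ENNReal.ofReal c * b : ℝ≥0∞) : EReal) = c * b := by
  rw [EReal.coe_ennreal_mul, EReal.coe_ennreal_ofReal, max_eq_left hc]

section Polar

variable {m n k : Type*} [Fintype k]
  {θ : (m → ℝ) → (n → ℝ) → ℝ≥0∞} {W : Matrix m n ℝ →+ ℝ}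

theorem apply_mul_transpose_le_sum_of_polar_le (hW : ∀ u v, (W (vecMulVec u v) : EReal) ≤ θ u v)
    (U : Matrix m k ℝ) (V : Matrix n k ℝ) :
    (W (U * Vᵀ) : EReal) ≤ ((∑ i, θ (fun a => U a i) (fun b => V b i) : ℝ≥0∞) : EReal) := by
  rw [Matrix.mul_transpose_eq_sum_vecMulVec, map_sum, EReal.coe_finset_sum,
    EReal.coe_ennreal_finset_sum]
  exact Finset.sum_le_sum fun i _ => hW _ _

theorem apply_mul_transpose_eq_sum_of_polar_eq {U : Matrix m k ℝ} {V : Matrix n k ℝ}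
    (hW : ∀ i, (W (vecMulVec (fun a => U a i) (fun b => V b i)) : EReal) =
      θ (fun a => U a i) (fun b => V b i)) :
    (W (U * Vᵀ) : EReal) = ((∑ i, θ (fun a => U a i) (fun b => V b i) : ℝ≥0∞) : EReal) := by
  rw [Matrix.mul_transpose_eq_sum_vecMulVec, map_sum, EReal.coe_finset_sum,
    EReal.coe_ennreal_finset_sum]
  exact Finset.sum_congr rfl fun i _ => hW i

end Polar

theorem sufficient_global_optimality_general {D N P r : ℕ}
    (θ : (Fin D → ℝ) → (Fin N → ℝ) → ℝ≥0∞)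
    (ℓ : (Fin D → Fin N → ℝ) → (Fin P → ℝ) → ℝ)
    (hconv : ConvexOn ℝ Set.univ (fun p : (Fin D → Fin N → ℝ) × (Fin P → ℝ) => ℓ p.1 p.2))
    (hdiff : ∀ Q : Fin P → ℝ, Differentiable ℝ (fun X : Fin D → Fin N → ℝ => ℓ X Q))
    (lam : ℝ) (hlam : 0 < lam)
    (Ut : Matrix (Fin D) (Fin r) ℝ) (Vt : Matrix (Fin N) (Fin r) ℝ) (Qt : Fin P → ℝ)
    (h1 : ∀ Q : Fin P → ℝ, ℓ (Ut * Vtᵀ) Qt ≤ ℓ (Ut * Vtᵀ) Q)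
    (h2 : ∀ i : Fin r,
      (((-(1 / lam)) * fderiv ℝ (fun X : Fin D → Fin N → ℝ => ℓ X Qt) (Ut * Vtᵀ)
          (vecMulVec (fun d => Ut d i) (fun n => Vt n i)) : ℝ) : EReal)
        = (θ (fun d => Ut d i) (fun n => Vt n i) : EReal))
    (h3 : ∀ (u : Fin D → ℝ) (v : Fin N → ℝ),
      (((-(1 / lam)) * fderiv ℝ (fun X : Fin D → Fin N → ℝ => ℓ X Qt) (Ut * Vtᵀ)
          (vecMulVec u v) : ℝ) : EReal) ≤ (θ u v : EReal)) :
    ∀ (r' : ℕ) (U : Matrix (Fin D) (Fin r') ℝ) (V : Matrix (Fin N) (Fin r') ℝ) (Q : Fin P → ℝ),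
      ((ℓ (Ut * Vtᵀ) Qt : ℝ) : EReal) +
          ((ENNReal.ofReal lam * ∑ i : Fin r, θ (fun d => Ut d i) (fun n => Vt n i) : ℝ≥0∞) : EReal)
        ≤ ((ℓ (U * Vᵀ) Q : ℝ) : EReal) +
          ((ENNReal.ofReal lam * ∑ i : Fin r', θ (fun d => U d i) (fun n => V n i) : ℝ≥0∞) : EReal) := by
  intro r' U V Q
  set G := fderiv ℝ (fun X : Fin D → Fin N → ℝ => ℓ X Qt) (Ut * Vtᵀ)
  -- `G` acts on `Fin D → Fin N → ℝ`; `W = -(1/λ) G` is the same functional on matrices.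
  let W : Matrix (Fin D) (Fin N) ℝ →+ ℝ :=
    AddMonoidHom.mk' (fun X => -(1 / lam) * G X) fun X Y => by
      rw [← mul_add]; exact congrArg _ (map_add G X Y)
  have hW : ∀ X, lam * W X = -G X := fun X => by
    simp only [W, AddMonoidHom.mk'_apply]
    field_simp
  have hsubgrad : ℓ (Ut * Vtᵀ) Qt + G (U * Vᵀ - Ut * Vtᵀ) ≤ ℓ (U * Vᵀ) Q :=
    hconv.add_fderiv_sub_le_of_isMinOn (hdiff Qt _).hasFDerivAt h1 _ _
  have hsub : G (U * Vᵀ - Ut * Vtᵀ) = G (U * Vᵀ) - G (Ut * Vtᵀ) := map_sub G _ _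
  have hsupport := apply_mul_transpose_eq_sum_of_polar_eq (θ := θ) (W := W) (U := Ut) (V := Vt) h2
  have hpolar := apply_mul_transpose_le_sum_of_polar_le (θ := θ) (W := W) h3 U V
  rw [EReal.coe_ennreal_ofReal_mul hlam.le, EReal.coe_ennreal_ofReal_mul hlam.le, ← hsupport,
    ← EReal.coe_mul, ← EReal.coe_add]
  calc ((ℓ (Ut * Vtᵀ) Qt + lam * W (Ut * Vtᵀ) : ℝ) : EReal)
      ≤ ((ℓ (U * Vᵀ) Q + lam * W (U * Vᵀ) : ℝ) : EReal) := by
        rw [EReal.coe_le_coe_iff, hW, hW]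
        linarith
    _ ≤ _ := by
        rw [EReal.coe_add, EReal.coe_mul]
        exact add_le_add_right (mul_le_mul_of_nonneg_left hpolar (by exact_mod_cast hlam.le)) _

/-- Sufficient conditions for global optimality of the factorized objective:
(1) `0 ∈ ∂_Q ℓ`, (2) per-column alignment `Ũᵢᵀ(−(1/λ)∇_Xℓ)Ṽᵢ = θ(Ũᵢ,Ṽᵢ)`, and
(3) the polar inequality `uᵀ(−(1/λ)∇_Xℓ)v ≤ θ(u,v)` for all `(u,v)`. -/
theorem sufficient_global_optimality {D N P r : ℕ}
    (θ : (Fin D → ℝ) → (Fin N → ℝ) → ℝ≥0∞) (hθ : IsRankOneReg θ)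
    (ℓ : (Fin D → Fin N → ℝ) → (Fin P → ℝ) → ℝ)
    (hconv : ConvexOn ℝ Set.univ (fun p : (Fin D → Fin N → ℝ) × (Fin P → ℝ) => ℓ p.1 p.2))
    (hdiff : ∀ Q : Fin P → ℝ, Differentiable ℝ (fun X : Fin D → Fin N → ℝ => ℓ X Q))
    (lam : ℝ) (hlam : 0 < lam)
    (Ut : Matrix (Fin D) (Fin r) ℝ) (Vt : Matrix (Fin N) (Fin r) ℝ) (Qt : Fin P → ℝ)
    (h1 : ∀ Q : Fin P → ℝ, ℓ (Ut * Vtᵀ) Qt ≤ ℓ (Ut * Vtᵀ) Q)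
    (h2 : ∀ i : Fin r,
      (((-(1 / lam)) * fderiv ℝ (fun X : Fin D → Fin N → ℝ => ℓ X Qt) (Ut * Vtᵀ)
          (vecMulVec (fun d => Ut d i) (fun n => Vt n i)) : ℝ) : EReal)
        = (θ (fun d => Ut d i) (fun n => Vt n i) : EReal))
    (h3 : ∀ (u : Fin D → ℝ) (v : Fin N → ℝ),
      (((-(1 / lam)) * fderiv ℝ (fun X : Fin D → Fin N → ℝ => ℓ X Qt) (Ut * Vtᵀ)
          (vecMulVec u v) : ℝ) : EReal) ≤ (θ u v : EReal)) :
    ∀ (r' : ℕ) (U : Matrix (Fin D) (Fin r') ℝ) (V : Matrix (Fin N) (Fin r') ℝ) (Q : Fin P → ℝ),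
      ((ℓ (Ut * Vtᵀ) Qt : ℝ) : EReal) +
          ((ENNReal.ofReal lam * ∑ i : Fin r, θ (fun d => Ut d i) (fun n => Vt n i) : ℝ≥0∞) : EReal)
        ≤ ((ℓ (U * Vᵀ) Q : ℝ) : EReal) +
          ((ENNReal.ofReal lam * ∑ i : Fin r', θ (fun d => U d i) (fun n => V n i) : ℝ≥0∞) : EReal) :=
  sufficient_global_optimality_general θ ℓ hconv hdiff lam hlam Ut Vt Qt h1 h2 h3
end

section
/- First-order optimal points satisfy the scaling condition: for θ(u,v) = σ_u(u)·σ_v(v) with σ_u, σ_v gauge functions, any first-order optimal point (Ũ,Ṽ) of f(U,V) = ℓ(Y,UVᵀ) + λ∑_i θ(U_i,V_i) satisfies Ũ_iᵀ(−(1/λ)∇_X ℓ(Y,ŨṼᵀ))Ṽ_i = θ(Ũ_i,Ṽ_i) for all i. -/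
/-!
The `u`-part of first-order optimality says that `g = -(1/λ) ∇_X ℓ · Ṽᵢ` is a subgradient at `Ũᵢ`
of the positively homogeneous function `u ↦ σ_u(u) σ_v(Ṽᵢ)`. Testing the subgradient inequality at
`0` and at `2Ũᵢ` gives Euler's identity `⟨g, Ũᵢ⟩ = θ(Ũᵢ, Ṽᵢ)`, and by linearity of the derivative
`⟨g, Ũᵢ⟩` is exactly `Ũᵢᵀ (-(1/λ) ∇_X ℓ) Ṽᵢ`.
-/

open Matrix Filter
open scoped ENNReal BigOperators

theorem LinearMap.apply_eq_of_subgradient_of_posHomogeneous {𝕜 E : Type*} [Field 𝕜] [LinearOrder 𝕜]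
    [IsStrictOrderedRing 𝕜] [AddCommGroup E] [Module 𝕜 E] {f : E → 𝕜}
    (hf : ∀ c : 𝕜, 0 ≤ c → ∀ x, f (c • x) = c * f x) {φ : E →ₗ[𝕜] 𝕜} {x : E}
    (hφ : ∀ y, f x + φ (y - x) ≤ f y) : φ x = f x := by
  have hzero := hφ ((0 : 𝕜) • x)
  have htwo := hφ ((2 : 𝕜) • x)
  rw [hf 0 le_rfl, zero_smul, zero_sub, map_neg] at hzero
  rw [hf 2 zero_le_two, two_smul, add_sub_cancel_right] at htwo
  linarith

theorem Matrix.map_vecMulVec_eq_sum_single {m n R M : Type*} [Fintype m] [DecidableEq m]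
    [CommSemiring R] [AddCommMonoid M] [Module R M] (L : Matrix m n R →ₗ[R] M)
    (u : m → R) (v : n → R) :
    L (vecMulVec u v) = ∑ i, u i • L (vecMulVec (Pi.single i 1) v) := by
  conv_lhs => rw [pi_eq_sum_univ' u]
  simp only [← vecMulVecBilin_apply_apply (R := R) (S := R), map_sum, map_smul,
    LinearMap.sum_apply, LinearMap.smul_apply]

theorem first_order_scaling_general {D N r : ℕ}
    (σu : (Fin D → ℝ) → ℝ) (σv : (Fin N → ℝ) → ℝ)
    -- σu, σv are gauge functions: nonnegative, vanish at 0, positively homogeneous, convex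
    (hσuhom : ∀ (c : ℝ), 0 ≤ c → ∀ u, σu (c • u) = c * σu u)
    (ℓ : (Fin D → Fin N → ℝ) → ℝ)
    (lam : ℝ) (hlam : 0 < lam)
    (Ut : Matrix (Fin D) (Fin r) ℝ) (Vt : Matrix (Fin N) (Fin r) ℝ)
    -- first-order optimality: 0 ∈ ∇_Xℓ·Ṽᵢ + λ∂_u θ(Ũᵢ,Ṽᵢ) and symmetrically in v
    (hfirstU : ∀ i : Fin r, ∃ g : Fin D → ℝ,
      (∀ u : Fin D → ℝ,
        σu (fun d => Ut d i) * σv (fun n => Vt n i) + ∑ d, g d * (u d - Ut d i)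
          ≤ σu u * σv (fun n => Vt n i)) ∧
      (∀ d : Fin D,
        fderiv ℝ ℓ (Ut * Vtᵀ) (vecMulVec (Pi.single d 1) (fun n => Vt n i)) + lam * g d = 0)) :
    ∀ i : Fin r,
      (-(1 / lam)) * fderiv ℝ ℓ (Ut * Vtᵀ) (vecMulVec (fun d => Ut d i) (fun n => Vt n i))
        = σu (fun d => Ut d i) * σv (fun n => Vt n i) := by
  intro i
  obtain ⟨g, hsubgrad, hstationary⟩ := hfirstU i
  have heuler : g ⬝ᵥ (fun d => Ut d i) = σu (fun d => Ut d i) * σv (fun n => Vt n i) :=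
    LinearMap.apply_eq_of_subgradient_of_posHomogeneous (f := fun u => σu u * σv (fun n => Vt n i))
      (φ := dotProductBilin ℝ ℝ g) (fun c hc u => by rw [hσuhom c hc, mul_assoc]) hsubgrad
  have hpartial (d : Fin D) :
      fderiv ℝ ℓ (Ut * Vtᵀ) (vecMulVec (Pi.single d 1) (fun n => Vt n i)) = -(lam * g d) :=
    eq_neg_of_add_eq_zero_left (hstationary d)
  have hdirectional : fderiv ℝ ℓ (Ut * Vtᵀ) (vecMulVec (fun d => Ut d i) (fun n => Vt n i))
      = -lam * (g ⬝ᵥ fun d => Ut d i) := by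
    refine (Matrix.map_vecMulVec_eq_sum_single (fderiv ℝ ℓ (Ut * Vtᵀ)).toLinearMap _ _).trans ?_
    rw [dotProduct, Finset.mul_sum]
    exact Finset.sum_congr rfl fun d _ => (congrArg (Ut d i * ·) (hpartial d)).trans (by ring)
  rw [hdirectional, heuler]
  field_simp

/-- First-order optimal points satisfy the per-column scaling condition
`Ũᵢᵀ(−(1/λ)∇_Xℓ)Ṽᵢ = θ(Ũᵢ,Ṽᵢ)` when `θ(u,v) = σ_u(u)·σ_v(v)` for gauge functions. -/
theorem first_order_scaling {D N r : ℕ}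
    (σu : (Fin D → ℝ) → ℝ) (σv : (Fin N → ℝ) → ℝ)
    -- σu, σv are gauge functions: nonnegative, vanish at 0, positively homogeneous, convex
    (hσu0 : σu 0 = 0) (hσunn : ∀ u, 0 ≤ σu u)
    (hσuhom : ∀ (c : ℝ), 0 ≤ c → ∀ u, σu (c • u) = c * σu u)
    (hσuconv : ConvexOn ℝ Set.univ σu)
    (hσv0 : σv 0 = 0) (hσvnn : ∀ v, 0 ≤ σv v)
    (hσvhom : ∀ (c : ℝ), 0 ≤ c → ∀ v, σv (c • v) = c * σv v)
    (hσvconv : ConvexOn ℝ Set.univ σv)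
    (ℓ : (Fin D → Fin N → ℝ) → ℝ)
    (hconv : ConvexOn ℝ Set.univ ℓ) (hdiff : Differentiable ℝ ℓ)
    (lam : ℝ) (hlam : 0 < lam)
    (Ut : Matrix (Fin D) (Fin r) ℝ) (Vt : Matrix (Fin N) (Fin r) ℝ)
    -- first-order optimality: 0 ∈ ∇_Xℓ·Ṽᵢ + λ∂_u θ(Ũᵢ,Ṽᵢ) and symmetrically in v
    (hfirstU : ∀ i : Fin r, ∃ g : Fin D → ℝ,
      (∀ u : Fin D → ℝ,
        σu (fun d => Ut d i) * σv (fun n => Vt n i) + ∑ d, g d * (u d - Ut d i)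
          ≤ σu u * σv (fun n => Vt n i)) ∧
      (∀ d : Fin D,
        fderiv ℝ ℓ (Ut * Vtᵀ) (vecMulVec (Pi.single d 1) (fun n => Vt n i)) + lam * g d = 0))
    (hfirstV : ∀ i : Fin r, ∃ h : Fin N → ℝ,
      (∀ v : Fin N → ℝ,
        σu (fun d => Ut d i) * σv (fun n => Vt n i) + ∑ n, h n * (v n - Vt n i)
          ≤ σu (fun d => Ut d i) * σv v) ∧
      (∀ n : Fin N,
        fderiv ℝ ℓ (Ut * Vtᵀ) (vecMulVec (fun d => Ut d i) (Pi.single n 1)) + lam * h n = 0)) :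
    ∀ i : Fin r,
      (-(1 / lam)) * fderiv ℝ ℓ (Ut * Vtᵀ) (vecMulVec (fun d => Ut d i) (fun n => Vt n i))
        = σu (fun d => Ut d i) * σv (fun n => Vt n i) :=
  first_order_scaling_general σu σv hσuhom ℓ lam hlam Ut Vt hfirstU
end

section
/- Proximal operator composition: for any gauge function σ_C on ℝ^n and constants λ, λ₂ > 0, the proximal operator of ψ(x) = λσ_C(x) + λ₂‖x‖₂ is the composition prox_ψ(y) = prox_{λ₂‖·‖₂}(prox_{λσ_C}(y)). -/
/-!
Write `p₁ = prox_{λσ}(y)` and `p₂ = prox_{λ₂‖·‖}(p₁)`. The prox of a multiple of the norm only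
shrinks its argument, so `p₂ = c • p₁` with `c ≥ 0`. For a convex, positively homogeneous `g`,
the residual `z - p` of `p = prox_g(z)` satisfies `⟪z - p, p⟫ = g p` and `⟪z - p, x⟫ ≤ g x`, so it
is a subgradient of `g` along the whole ray through `p`; in particular `y - p₁ ∈ ∂(λσ)(p₂)`.
Expanding `‖y - x‖²` around `p₁`, this subgradient inequality reduces the minimality of `p₂` for
the combined objective to its minimality for the objective defining `prox_{λ₂‖·‖}(p₁)`.
-/

open Set Filter Topology RealInnerProductSpace

section Prox

variable {E : Type*} [NormedAddCommGroup E] [InnerProductSpace ℝ E]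

def IsProx (g : E → ℝ) (z p : E) : Prop :=
  ∀ x, 1 / 2 * ‖z - p‖ ^ 2 + g p ≤ 1 / 2 * ‖z - x‖ ^ 2 + g x

namespace IsProx

variable {g : E → ℝ} {z p : E}

theorem inner_sub_le (hg : ConvexOn ℝ univ g) (hp : IsProx g z p) (x : E) :
    ⟪z - p, x - p⟫ ≤ g x - g p := by
  have hθ : ∀ θ ∈ Ioo (0 : ℝ) 1, ⟪z - p, x - p⟫ ≤ θ / 2 * ‖x - p‖ ^ 2 + (g x - g p) := by
    rintro θ ⟨hθ0, hθ1⟩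
    have hmin := hp (p + θ • (x - p))
    have hconv : g (p + θ • (x - p)) ≤ (1 - θ) * g p + θ * g x := by
      have hseg : p + θ • (x - p) = (1 - θ) • p + θ • x := by
        rw [smul_sub, sub_smul, one_smul]; abel
      rw [hseg]
      exact hg.2 (mem_univ p) (mem_univ x) (sub_nonneg.2 hθ1.le) hθ0.le (by ring)
    have hnorm : ‖z - (p + θ • (x - p))‖ ^ 2
        = ‖z - p‖ ^ 2 - 2 * (θ * ⟪z - p, x - p⟫) + θ ^ 2 * ‖x - p‖ ^ 2 := by
      rw [sub_add_eq_sub_sub, norm_sub_sq_real, real_inner_smul_right, norm_smul,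
        Real.norm_of_nonneg hθ0.le]
      ring
    rw [hnorm] at hmin
    refine le_of_mul_le_mul_left ?_ hθ0
    nlinarith
  have hlim : Tendsto (fun θ : ℝ => θ / 2 * ‖x - p‖ ^ 2 + (g x - g p)) (𝓝[>] 0)
      (𝓝 (g x - g p)) := by
    have hcont : Continuous fun θ : ℝ => θ / 2 * ‖x - p‖ ^ 2 + (g x - g p) := by fun_prop
    simpa using (hcont.tendsto 0).mono_left nhdsWithin_le_nhds
  exact ge_of_tendsto hlim (eventually_of_mem (Ioo_mem_nhdsGT one_pos) hθ)

variable (hg : ConvexOn ℝ univ g) (hhom : ∀ c : ℝ, 0 ≤ c → ∀ x, g (c • x) = c * g x)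
include hg hhom

theorem inner_self_eq (hp : IsProx g z p) : ⟪z - p, p⟫ = g p := by
  have hg0 : g 0 = 0 := by simpa using hhom 0 le_rfl 0
  have h0 := hp.inner_sub_le hg 0
  have h2 := hp.inner_sub_le hg ((2 : ℝ) • p)
  rw [zero_sub, inner_neg_right, hg0] at h0
  rw [hhom 2 zero_le_two, two_smul, add_sub_cancel_right] at h2
  linarith

theorem inner_le (hp : IsProx g z p) (x : E) : ⟪z - p, x⟫ ≤ g x := by
  have h := hp.inner_sub_le hg x
  rw [inner_sub_right, hp.inner_self_eq hg hhom] at h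
  linarith

theorem inner_sub_smul_le (hp : IsProx g z p) {c : ℝ} (hc : 0 ≤ c) (x : E) :
    ⟪z - p, x - c • p⟫ ≤ g x - g (c • p) := by
  rw [inner_sub_right, real_inner_smul_right, hp.inner_self_eq hg hhom, hhom c hc]
  linarith [hp.inner_le hg hhom x]

omit hg hhom

theorem exists_nonneg_smul_of_norm {r : ℝ} (hr : 0 < r) (hp : IsProx (fun x => r * ‖x‖) z p) :
    ∃ c : ℝ, 0 ≤ c ∧ p = c • z := by
  have hg : ConvexOn ℝ univ fun x : E => r * ‖x‖ := convexOn_univ_norm.smul hr.le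
  have hhom : ∀ c : ℝ, 0 ≤ c → ∀ x : E, r * ‖c • x‖ = c * (r * ‖x‖) := fun c hc x => by
    rw [norm_smul, Real.norm_of_nonneg hc]; ring
  have hself : ⟪z - p, p⟫ = r * ‖p‖ := hp.inner_self_eq hg hhom
  have hres : ‖z - p‖ ≤ r := by
    have h := hp.inner_le hg hhom (z - p)
    rw [real_inner_self_eq_norm_sq] at h
    nlinarith [norm_nonneg (z - p)]
  -- Cauchy–Schwarz is an equality here, so `z - p` points along `p`.
  have hdir : ‖p‖ • (z - p) = r • p := by
    rcases eq_or_ne p 0 with rfl | hp0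
    · simp
    · have hcs := real_inner_le_norm (z - p) p
      have hnorm : ‖z - p‖ = r :=
        le_antisymm hres (le_of_mul_le_mul_right (by linarith) (norm_pos_iff.2 hp0))
      rw [← hnorm]
      exact inner_eq_norm_mul_iff_real.1 (by rw [hself, hnorm])
  refine ⟨‖p‖ / (‖p‖ + r), by positivity, ?_⟩
  have hz : ‖p‖ • z = (‖p‖ + r) • p := by
    rw [add_smul, ← hdir, smul_sub]; abel
  rw [div_eq_inv_mul, mul_smul, hz, smul_smul, inv_mul_cancel₀ (by positivity), one_smul]

end IsProx

theorem isProx_add_of_inner_sub_le {f h : E → ℝ} {y p₁ p₂ : E} (hp₂ : IsProx h p₁ p₂)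
    (hf : ∀ x, ⟪y - p₁, x - p₂⟫ ≤ f x - f p₂) : IsProx (fun x => f x + h x) y p₂ := by
  intro x
  have hexp : ∀ w, ‖y - w‖ ^ 2 = ‖y - p₁‖ ^ 2 + 2 * ⟪y - p₁, p₁ - w⟫ + ‖p₁ - w‖ ^ 2 :=
    fun w => by rw [← norm_add_sq_real, sub_add_sub_cancel]
  have hsplit : ⟪y - p₁, p₁ - p₂⟫ = ⟪y - p₁, p₁ - x⟫ + ⟪y - p₁, x - p₂⟫ := by
    rw [← inner_add_right, sub_add_sub_cancel]
  rw [hexp x, hexp p₂]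
  linarith [hp₂ x, hf x]

end Prox

theorem prox_gauge_l2_composition_general {n : ℕ}
    (σ : EuclideanSpace ℝ (Fin n) → ℝ)
    -- σ is a gauge function: vanishes at 0, nonnegative, positively homogeneous, convex
    (hσhom : ∀ (c : ℝ), 0 ≤ c → ∀ x, σ (c • x) = c * σ x)
    (hσconv : ConvexOn ℝ Set.univ σ)
    (lam lam2 : ℝ) (hlam : 0 < lam) (hlam2 : 0 < lam2)
    (y p1 p2 : EuclideanSpace ℝ (Fin n))
    (hp1 : ∀ x : EuclideanSpace ℝ (Fin n),
      (1 / 2) * ‖y - p1‖ ^ 2 + lam * σ p1 ≤ (1 / 2) * ‖y - x‖ ^ 2 + lam * σ x)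
    (hp2 : ∀ x : EuclideanSpace ℝ (Fin n),
      (1 / 2) * ‖p1 - p2‖ ^ 2 + lam2 * ‖p2‖ ≤ (1 / 2) * ‖p1 - x‖ ^ 2 + lam2 * ‖x‖) :
    ∀ x : EuclideanSpace ℝ (Fin n),
      (1 / 2) * ‖y - p2‖ ^ 2 + lam * σ p2 + lam2 * ‖p2‖
        ≤ (1 / 2) * ‖y - x‖ ^ 2 + lam * σ x + lam2 * ‖x‖ := by
  have hp1' : IsProx (fun x => lam * σ x) y p1 := hp1
  have hp2' : IsProx (fun x => lam2 * ‖x‖) p1 p2 := hp2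
  have hconv : ConvexOn ℝ univ fun x => lam * σ x := hσconv.smul hlam.le
  have hhom : ∀ c : ℝ, 0 ≤ c → ∀ x, lam * σ (c • x) = c * (lam * σ x) := fun c hc x => by
    rw [hσhom c hc]; ring
  obtain ⟨c, hc, rfl⟩ := hp2'.exists_nonneg_smul_of_norm hlam2
  have hcomp := isProx_add_of_inner_sub_le hp2' (hp1'.inner_sub_smul_le hconv hhom hc)
  intro x
  linarith [hcomp x]

/-- Proximal operator composition: for a gauge function `σ` and `λ, λ₂ > 0`,
`prox_{λσ + λ₂‖·‖₂}(y) = prox_{λ₂‖·‖₂}(prox_{λσ}(y))`. Here `p1 = prox_{λσ}(y)` and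
`p2 = prox_{λ₂‖·‖₂}(p1)` are characterized as minimizers, and the conclusion states that
`p2` minimizes the objective defining `prox_{λσ(·) + λ₂‖·‖₂}(y)`. -/
theorem prox_gauge_l2_composition {n : ℕ}
    (σ : EuclideanSpace ℝ (Fin n) → ℝ)
    -- σ is a gauge function: vanishes at 0, nonnegative, positively homogeneous, convex
    (hσ0 : σ 0 = 0) (hσnn : ∀ x, 0 ≤ σ x)
    (hσhom : ∀ (c : ℝ), 0 ≤ c → ∀ x, σ (c • x) = c * σ x)
    (hσconv : ConvexOn ℝ Set.univ σ)
    (lam lam2 : ℝ) (hlam : 0 < lam) (hlam2 : 0 < lam2)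
    (y p1 p2 : EuclideanSpace ℝ (Fin n))
    (hp1 : ∀ x : EuclideanSpace ℝ (Fin n),
      (1 / 2) * ‖y - p1‖ ^ 2 + lam * σ p1 ≤ (1 / 2) * ‖y - x‖ ^ 2 + lam * σ x)
    (hp2 : ∀ x : EuclideanSpace ℝ (Fin n),
      (1 / 2) * ‖p1 - p2‖ ^ 2 + lam2 * ‖p2‖ ≤ (1 / 2) * ‖p1 - x‖ ^ 2 + lam2 * ‖x‖) :
    ∀ x : EuclideanSpace ℝ (Fin n),
      (1 / 2) * ‖y - p2‖ ^ 2 + lam * σ p2 + lam2 * ‖p2‖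
        ≤ (1 / 2) * ‖y - x‖ ^ 2 + lam * σ x + lam2 * ‖x‖ :=
  prox_gauge_l2_composition_general σ hσhom hσconv lam lam2 hlam hlam2 y p1 p2 hp1 hp2
end
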